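/- The binormal ROC curve R(p) = Φ(μ + σΦ^{-1}(p)) with μ > 0 is concave on (0,1) if and only if σ = 1. -/

import Mathlib

/-!
Write `x = Φ⁻¹(p)`. By the inverse function theorem `R'(p) = σ φ(μ + σx) / φ(x)`, and
since `Φ⁻¹` is an increasing bijection of `(0,1)` onto `ℝ`, `R` is concave exactly when this
likelihood ratio is antitone in `x`. Its logarithm is the quadratic
`x²/2 - (μ + σx)²/2 = (1 - σ²)/2 · x² - μσ · x - μ²/2`,
which is antitone on `ℝ` only when its leading coefficient `1 - σ²` vanishes.
-/

noncomputable def stdNormalPDF (x : ℝ) : ℝ :=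
  Real.exp (-x ^ 2 / 2) / Real.sqrt (2 * Real.pi)

noncomputable def stdNormalCDF (x : ℝ) : ℝ :=
  ∫ t in Set.Iic x, stdNormalPDF t

open Set MeasureTheory ProbabilityTheory

lemma stdNormalPDF_eq_gaussianPDFReal : stdNormalPDF = gaussianPDFReal 0 1 := by
  ext x
  simp [stdNormalPDF, gaussianPDFReal, div_eq_inv_mul]

lemma stdNormalPDF_pos (x : ℝ) : 0 < stdNormalPDF x := by
  unfold stdNormalPDF; positivity

lemma continuous_stdNormalPDF : Continuous stdNormalPDF := by
  unfold stdNormalPDF; fun_prop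

lemma integrable_stdNormalPDF : Integrable stdNormalPDF := by
  rw [stdNormalPDF_eq_gaussianPDFReal]; exact integrable_gaussianPDFReal 0 1

lemma integral_stdNormalPDF : ∫ x, stdNormalPDF x = 1 := by
  rw [stdNormalPDF_eq_gaussianPDFReal]; exact integral_gaussianPDFReal_eq_one 0 one_ne_zero

lemma stdNormalCDF_sub_stdNormalCDF (a b : ℝ) :
    stdNormalCDF b - stdNormalCDF a = ∫ t in a..b, stdNormalPDF t :=
  intervalIntegral.integral_Iic_sub_Iic integrable_stdNormalPDF.integrableOn
    integrable_stdNormalPDF.integrableOn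

lemma hasDerivAt_stdNormalCDF (x : ℝ) : HasDerivAt stdNormalCDF (stdNormalPDF x) x := by
  have hFTC : HasDerivAt (fun y => stdNormalCDF 0 + ∫ t in (0 : ℝ)..y, stdNormalPDF t)
      (stdNormalPDF x) x :=
    (intervalIntegral.integral_hasDerivAt_right integrable_stdNormalPDF.intervalIntegrable
      continuous_stdNormalPDF.aestronglyMeasurable.stronglyMeasurableAtFilter
      continuous_stdNormalPDF.continuousAt).const_add _
  refine hFTC.congr_of_eventuallyEq (Filter.Eventually.of_forall fun y => ?_)
  simp only [← stdNormalCDF_sub_stdNormalCDF, add_sub_cancel]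

lemma strictMono_stdNormalCDF : StrictMono stdNormalCDF := fun a b hab => by
  have := intervalIntegral.intervalIntegral_pos_of_pos
    integrable_stdNormalPDF.intervalIntegrable stdNormalPDF_pos hab
  linarith [stdNormalCDF_sub_stdNormalCDF a b]

lemma stdNormalCDF_mem_Ioo (x : ℝ) : stdNormalCDF x ∈ Ioo (0 : ℝ) 1 := by
  have hnonneg : 0 ≤ stdNormalCDF (x - 1) :=
    setIntegral_nonneg measurableSet_Iic fun t _ => (stdNormalPDF_pos t).le
  have hle_one : stdNormalCDF (x + 1) ≤ 1 :=
    integral_stdNormalPDF ▸ setIntegral_le_integral integrable_stdNormalPDF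
      (Filter.Eventually.of_forall fun t => (stdNormalPDF_pos t).le)
  exact ⟨hnonneg.trans_lt (strictMono_stdNormalCDF (by linarith)),
    (strictMono_stdNormalCDF (by linarith)).trans_le hle_one⟩

noncomputable def rocSlope (μ σ x : ℝ) : ℝ :=
  σ * stdNormalPDF (μ + σ * x) / stdNormalPDF x

lemma rocSlope_eq_exp (μ σ x : ℝ) :
    rocSlope μ σ x =
      σ * Real.exp ((1 - σ ^ 2) / 2 * x ^ 2 + -(μ * σ) * x + -(μ ^ 2 / 2)) := by
  rw [rocSlope, stdNormalPDF, stdNormalPDF, mul_div_assoc,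
    div_div_div_cancel_right₀ (by positivity), ← Real.exp_sub]
  ring_nf

section Quantile

variable {Φinv : ℝ → ℝ} (hinv : ∀ p ∈ Ioo (0 : ℝ) 1, stdNormalCDF (Φinv p) = p)
include hinv

lemma strictMonoOn_of_stdNormalCDF_rightInverse : StrictMonoOn Φinv (Ioo 0 1) :=
  fun p hp q hq hpq => strictMono_stdNormalCDF.lt_iff_lt.1 (by rwa [hinv p hp, hinv q hq])

lemma hasDerivAt_of_stdNormalCDF_inverse (hinv' : ∀ x, Φinv (stdNormalCDF x) = x)
    {p : ℝ} (hp : p ∈ Ioo (0 : ℝ) 1) : HasDerivAt Φinv (stdNormalPDF (Φinv p))⁻¹ p := by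
  have hsurj : Φinv '' Ioo 0 1 = univ :=
    eq_univ_of_forall fun x => ⟨stdNormalCDF x, stdNormalCDF_mem_Ioo x, hinv' x⟩
  have hcont : ContinuousAt Φinv p :=
    (strictMonoOn_of_stdNormalCDF_rightInverse hinv).continuousAt_of_image_mem_nhds
      (isOpen_Ioo.mem_nhds hp) (hsurj ▸ Filter.univ_mem)
  exact HasDerivAt.of_local_left_inverse hcont (hasDerivAt_stdNormalCDF _)
    (stdNormalPDF_pos _).ne' (Filter.eventually_of_mem (isOpen_Ioo.mem_nhds hp) hinv)

lemma hasDerivAt_binormalROC (hinv' : ∀ x, Φinv (stdNormalCDF x) = x) (μ σ : ℝ) {p : ℝ}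
    (hp : p ∈ Ioo (0 : ℝ) 1) :
    HasDerivAt (fun p => stdNormalCDF (μ + σ * Φinv p)) (rocSlope μ σ (Φinv p)) p := by
  have hinner := ((hasDerivAt_of_stdNormalCDF_inverse hinv hinv' hp).const_mul σ).const_add μ
  refine ((hasDerivAt_stdNormalCDF _).comp p hinner).congr_deriv ?_
  rw [rocSlope]
  ring

lemma concaveOn_binormalROC_iff_antitone_rocSlope (hinv' : ∀ x, Φinv (stdNormalCDF x) = x)
    (μ σ : ℝ) :
    ConcaveOn ℝ (Ioo 0 1) (fun p => stdNormalCDF (μ + σ * Φinv p)) ↔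
      Antitone (rocSlope μ σ) := by
  have hderiv : ∀ p ∈ Ioo (0 : ℝ) 1,
      deriv (fun p => stdNormalCDF (μ + σ * Φinv p)) p = rocSlope μ σ (Φinv p) :=
    fun p hp => (hasDerivAt_binormalROC hinv hinv' μ σ hp).deriv
  constructor
  · intro hconcave x y hxy
    have hanti := hconcave.antitoneOn_deriv
      (fun p hp => (hasDerivAt_binormalROC hinv hinv' μ σ hp).differentiableAt)
      (stdNormalCDF_mem_Ioo x) (stdNormalCDF_mem_Ioo y) (strictMono_stdNormalCDF.monotone hxy)
    rwa [hderiv _ (stdNormalCDF_mem_Ioo x), hderiv _ (stdNormalCDF_mem_Ioo y), hinv', hinv']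
      at hanti
  · intro hanti
    refine AntitoneOn.concaveOn_of_deriv (convex_Ioo 0 1)
      (fun p hp => (hasDerivAt_binormalROC hinv hinv' μ σ hp).continuousAt.continuousWithinAt)
      (fun p hp => ?_) (fun p hp q hq hpq => ?_) <;> rw [interior_Ioo] at hp
    · exact (hasDerivAt_binormalROC hinv hinv' μ σ hp).differentiableAt.differentiableWithinAt
    · rw [interior_Ioo] at hq
      rw [hderiv p hp, hderiv q hq]
      exact hanti ((strictMonoOn_of_stdNormalCDF_rightInverse hinv).monotoneOn hp hq hpq)

end Quantile

lemma antitone_quadratic_iff {a b c : ℝ} :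
    Antitone (fun x => a * x ^ 2 + b * x + c) ↔ a = 0 ∧ b ≤ 0 := by
  constructor
  · intro h
    have hincrement : ∀ t, a * t + b ≤ 0 := fun t => by
      have := h (le_add_of_nonneg_right zero_le_one : (t - 1) / 2 ≤ _)
      linear_combination this
    refine ⟨by_contra fun ha => ?_, by simpa using hincrement 0⟩
    have := hincrement ((1 - b) / a)
    rw [mul_div_cancel₀ _ ha] at this
    linarith
  · rintro ⟨rfl, hb⟩ x y hxy
    dsimp only
    nlinarith

lemma antitone_rocSlope_iff {μ σ : ℝ} (hμ : 0 ≤ μ) (hσ : 0 < σ) :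
    Antitone (rocSlope μ σ) ↔ σ = 1 := by
  have hexp : Antitone (rocSlope μ σ) ↔
      Antitone (fun x => (1 - σ ^ 2) / 2 * x ^ 2 + -(μ * σ) * x + -(μ ^ 2 / 2)) := by
    simp only [Antitone, rocSlope_eq_exp, mul_le_mul_iff_right₀ hσ, Real.exp_le_exp]
  rw [hexp, antitone_quadratic_iff]
  constructor
  · rintro ⟨h, -⟩
    nlinarith
  · rintro rfl
    constructor <;> nlinarith

/-- the binormal ROC curve `R(p) = Φ(μ + σΦ⁻¹(p))` with `μ > 0`
is concave on (0,1) iff `σ = 1`. -/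
theorem binormal_concave_iff (μ σ : ℝ) (hμ : 0 < μ) (hσ : 0 < σ)
    (Φinv : ℝ → ℝ)
    (hinv : ∀ p ∈ Set.Ioo (0:ℝ) 1, stdNormalCDF (Φinv p) = p)
    (hinv' : ∀ x : ℝ, Φinv (stdNormalCDF x) = x) :
    ConcaveOn ℝ (Set.Ioo (0:ℝ) 1) (fun p => stdNormalCDF (μ + σ * Φinv p)) ↔
      σ = 1 :=
  (concaveOn_binormalROC_iff_antitone_rocSlope hinv hinv' μ σ).trans
    (antitone_rocSlope_iff hμ.le hσ)
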